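/- Let p ∈ [1,∞), let I be a nonempty set, and let f, g ∈ ℓ^p(I)^+. Then f ≺_s g if and only if there exists h ∈ ℓ^p(I)^+ such that f(i) ≤ h(i) for all i ∈ I and h ≺ g. -/

import Mathlib

open scoped ENNReal BigOperators

noncomputable section

/-- ℓᵖ(I) with real scalars. -/
abbrev Lp (I : Type*) (p : ℝ≥0∞) := lp (fun _ : I => ℝ) p

/-- The standard basis vector `e_j` of `ℓᵖ(I)`. -/
def stdVec {I : Type*} (p : ℝ≥0∞) (j : I) : Lp I p :=
  haveI := Classical.decEq I
  lp.single p j 1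

/-- A bounded operator on ℓᵖ(I) is positive if it maps the positive cone into itself. -/
def IsPos {I : Type*} {p : ℝ≥0∞} [Fact (1 ≤ p)] (A : Lp I p →L[ℝ] Lp I p) : Prop :=
  ∀ f : Lp I p, (∀ i, 0 ≤ f i) → ∀ i, 0 ≤ A f i

/-- Doubly stochastic operator on ℓᵖ(I). -/
def DoublyStochastic {I : Type*} {p : ℝ≥0∞} [Fact (1 ≤ p)]
    (A : Lp I p →L[ℝ] Lp I p) : Prop :=
  IsPos A ∧ (∀ i : I, HasSum (fun j : I => A (stdVec p j) i) 1)
          ∧ (∀ j : I, HasSum (fun i : I => A (stdVec p j) i) 1)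

/-- Doubly substochastic operator on ℓᵖ(I) (finite partial sums formulation). -/
def DoublySubstochastic {I : Type*} {p : ℝ≥0∞} [Fact (1 ≤ p)]
    (A : Lp I p →L[ℝ] Lp I p) : Prop :=
  IsPos A ∧ (∀ i : I, ∀ s : Finset I, ∑ j ∈ s, A (stdVec p j) i ≤ 1)
          ∧ (∀ j : I, ∀ s : Finset I, ∑ i ∈ s, A (stdVec p j) i ≤ 1)

/-- Increasable doubly substochastic operator on ℓᵖ(I). -/
def IncreasableDsS {I : Type*} {p : ℝ≥0∞} [Fact (1 ≤ p)]
    (A : Lp I p →L[ℝ] Lp I p) : Prop :=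
  IsPos A ∧ ∃ A₁ : Lp I p →L[ℝ] Lp I p, DoublyStochastic A₁ ∧
    ∀ i j : I, A (stdVec p j) i ≤ A₁ (stdVec p j) i

/-- Majorization: `f ≺ g`. -/
def Maj {I : Type*} {p : ℝ≥0∞} [Fact (1 ≤ p)] (f g : Lp I p) : Prop :=
  ∃ D : Lp I p →L[ℝ] Lp I p, DoublyStochastic D ∧ f = D g

/-- Weak majorization: `f ≺_w g`. -/
def MajW {I : Type*} {p : ℝ≥0∞} [Fact (1 ≤ p)] (f g : Lp I p) : Prop :=
  ∃ D : Lp I p →L[ℝ] Lp I p, DoublySubstochastic D ∧ f = D g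

/-- Submajorization: `f ≺_s g`. -/
def MajS {I : Type*} {p : ℝ≥0∞} [Fact (1 ≤ p)] (f g : Lp I p) : Prop :=
  ∃ D : Lp I p →L[ℝ] Lp I p, IncreasableDsS D ∧ f = D g

/-- Permutation operator on ℓᵖ(I). -/
def IsPermutationOp {I : Type*} {p : ℝ≥0∞} [Fact (1 ≤ p)]
    (P : Lp I p →L[ℝ] Lp I p) : Prop :=
  ∃ θ : I ≃ I, ∀ j : I, P (stdVec p j) = stdVec p (θ j)

/-- `P` is the operator `P_θ` associated with the injection `θ : I → I`,
i.e. `P f = ∑_{k ∈ I} f(k) e_{θ(k)}`. -/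
def IsPTheta {I : Type*} {p : ℝ≥0∞} [Fact (1 ≤ p)] (θ : I → I)
    (P : Lp I p →L[ℝ] Lp I p) : Prop :=
  (∀ f : Lp I p, ∀ k : I, P f (θ k) = f k) ∧
  (∀ f : Lp I p, ∀ i : I, i ∉ Set.range θ → P f i = 0)

/-- `T` preserves weak majorization on the positive cone. -/
def PreservesMajW {I : Type*} {p : ℝ≥0∞} [Fact (1 ≤ p)]
    (T : Lp I p →L[ℝ] Lp I p) : Prop :=
  ∀ f g : Lp I p, (∀ i, 0 ≤ f i) → (∀ i, 0 ≤ g i) → MajW f g → MajW (T f) (T g)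

/-- `T` preserves submajorization on the positive cone. -/
def PreservesMajS {I : Type*} {p : ℝ≥0∞} [Fact (1 ≤ p)]
    (T : Lp I p →L[ℝ] Lp I p) : Prop :=
  ∀ f g : Lp I p, (∀ i, 0 ≤ f i) → (∀ i, 0 ≤ g i) → MajS f g → MajS (T f) (T g)

end

section Aux

/-! The coordinates of `D g` are the series `∑ⱼ g(j) D(e_j)(i)`, so enlarging the entries of `D`
enlarges `D g` on the positive cone. Conversely, every `f` with `0 ≤ f ≤ D g` equals `(c • D) g`
for the diagonal contraction `c = f / D g` (with `f i / 0 = 0`, harmless since `f i = 0` wherever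
`D g i = 0`), and `c • D` lies entrywise below the doubly stochastic `D`. -/

section Majorization

lemma stdVec_nonneg {I : Type*} {p : ℝ≥0∞} (j i : I) : 0 ≤ (stdVec p j : Lp I p) i := by
  classical
  rw [stdVec, lp.single_apply, Pi.single_apply]
  split_ifs <;> norm_num

variable {I : Type*} {p : ℝ≥0∞} [Fact (1 ≤ p)]

lemma hasSum_mul_apply_stdVec (hp : p ≠ ∞) (A : Lp I p →L[ℝ] Lp I p) (g : Lp I p) (i : I) :
    HasSum (fun j => g j * A (stdVec p j) i) (A g i) := by
  classical
  have hterm (j : I) : (lp.single p j (g j) : Lp I p) = g j • stdVec p j := by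
    rw [stdVec, ← lp.single_smul, smul_eq_mul, mul_one]
  simpa [hterm, lp.evalCLM] using (lp.hasSum_single hp g).mapL ((lp.evalCLM ℝ _ p i).comp A)

lemma apply_le_apply_of_entries_le (hp : p ≠ ∞) {A B : Lp I p →L[ℝ] Lp I p}
    (hAB : ∀ i j, A (stdVec p j) i ≤ B (stdVec p j) i) {g : Lp I p} (hg : ∀ i, 0 ≤ g i) (i : I) :
    A g i ≤ B g i :=
  hasSum_le (fun j => mul_le_mul_of_nonneg_left (hAB i j) (hg j))
    (hasSum_mul_apply_stdVec hp A g i) (hasSum_mul_apply_stdVec hp B g i)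

variable (p) in
noncomputable def diagCLM (c : I → ℝ) {K : ℝ} (hK : 0 ≤ K) (hc : ∀ i, |c i| ≤ K) :
    Lp I p →L[ℝ] Lp I p :=
  lp.mapCLM p (fun i => c i • ContinuousLinearMap.id ℝ ℝ) hK fun i =>
    calc ‖c i • ContinuousLinearMap.id ℝ ℝ‖ ≤ ‖c i‖ * ‖ContinuousLinearMap.id ℝ ℝ‖ :=
          norm_smul_le (c i) (ContinuousLinearMap.id ℝ ℝ)
      _ ≤ K * 1 := mul_le_mul (hc i) ContinuousLinearMap.norm_id_le (norm_nonneg _) hK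
      _ = K := mul_one K

@[simp]
lemma diagCLM_apply (c : I → ℝ) {K : ℝ} (hK : 0 ≤ K) (hc : ∀ i, |c i| ≤ K) (f : Lp I p) (i : I) :
    diagCLM p c hK hc f i = c i * f i := by
  simp [diagCLM]

lemma increasableDsS_diagCLM_comp {D : Lp I p →L[ℝ] Lp I p} (hD : DoublyStochastic D)
    (c : I → ℝ) (hc₀ : ∀ i, 0 ≤ c i) (hc₁ : ∀ i, c i ≤ 1) :
    IncreasableDsS
      ((diagCLM p c zero_le_one fun i => (abs_of_nonneg (hc₀ i)).trans_le (hc₁ i)).comp D) := by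
  refine ⟨fun f hf i => ?_, D, hD, fun i j => ?_⟩
  · simpa using mul_nonneg (hc₀ i) (hD.1 f hf i)
  · simpa using mul_le_of_le_one_left (hD.1 _ (stdVec_nonneg j) i) (hc₁ i)

lemma MajS.exists_maj_ge (hp : p ≠ ∞) {f g : Lp I p} (hg : ∀ i, 0 ≤ g i) (hfg : MajS f g) :
    ∃ h : Lp I p, (∀ i, 0 ≤ h i) ∧ (∀ i, f i ≤ h i) ∧ Maj h g := by
  obtain ⟨D, ⟨-, A, hA, hDA⟩, rfl⟩ := hfg
  exact ⟨A g, hA.1 g hg, apply_le_apply_of_entries_le hp hDA hg, A, hA, rfl⟩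

lemma majS_of_le_of_maj {f h g : Lp I p} (hf : ∀ i, 0 ≤ f i) (hfh : ∀ i, f i ≤ h i)
    (hhg : Maj h g) : MajS f g := by
  obtain ⟨D, hD, rfl⟩ := hhg
  have hc₀ (i : I) : 0 ≤ f i / D g i := div_nonneg (hf i) ((hf i).trans (hfh i))
  have hc₁ (i : I) : f i / D g i ≤ 1 := div_le_one_of_le₀ (hfh i) ((hf i).trans (hfh i))
  refine ⟨_, increasableDsS_diagCLM_comp hD _ hc₀ hc₁, lp.ext <| funext fun i => ?_⟩
  simpa using (div_mul_cancel_of_imp fun h0 => le_antisymm (h0 ▸ hfh i) (hf i)).symm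

end Majorization

theorem stmt_8_general {I : Type*} (p : ℝ≥0∞) [Fact (1 ≤ p)] (hp : p ≠ ∞)
    (f g : Lp I p) (hf : ∀ i, 0 ≤ f i) (hg : ∀ i, 0 ≤ g i) :
    MajS f g ↔ ∃ h : Lp I p, (∀ i, 0 ≤ h i) ∧ (∀ i, f i ≤ h i) ∧ Maj h g :=
  ⟨MajS.exists_maj_ge hp hg, fun ⟨_, _, hfh, hhg⟩ => majS_of_le_of_maj hf hfh hhg⟩

theorem stmt_8 {I : Type*} [Nonempty I] (p : ℝ≥0∞) [Fact (1 ≤ p)] (hp : p ≠ ∞)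
    (f g : Lp I p) (hf : ∀ i, 0 ≤ f i) (hg : ∀ i, 0 ≤ g i) :
    MajS f g ↔ ∃ h : Lp I p, (∀ i, 0 ≤ h i) ∧ (∀ i, f i ≤ h i) ∧ Maj h g :=
  stmt_8_general p hp f g hf hg
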